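/- Let T_0 = {(x_i, x_i*)}_{i=1}^n be a finite p-cyclically monotone operator in a Hilbert space, and define recursively T_k = ({x_k} × T_{k-1}^{μ_p}(x_k)) ∪ T_{k-1} for k = 1,...,n. Then each T_k, k = 1,...,n, is p-cyclically monotone. -/

import Mathlib

open scoped BigOperators RealInnerProductSpace

/-- The cyclic sum `∑_{i=0}^{p} ⟨x_{i+1} - x_i, x_i*⟩` (indices mod `p+1`),
in a real Hilbert space identified with its dual. -/
def cycSumH {X : Type*} [NormedAddCommGroup X] [InnerProductSpace ℝ X] (p : ℕ)
    (z : Fin (p + 1) → X × X) : ℝ :=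
  ∑ i, ⟪(z (i + 1)).1 - (z i).1, (z i).2⟫

/-- `T` (identified with its graph) is `p`-cyclically monotone. -/
def CycMonoH {X : Type*} [NormedAddCommGroup X] [InnerProductSpace ℝ X] (p : ℕ)
    (T : Set (X × X)) : Prop :=
  ∀ z : Fin (p + 1) → X × X, (∀ i, z i ∈ T) → cycSumH p z ≤ 0

/-- The `p`-cyclically monotone polar of `T`. -/
def cycPolarH {X : Type*} [NormedAddCommGroup X] [InnerProductSpace ℝ X] (p : ℕ)
    (T : Set (X × X)) : Set (X × X) :=
  {w | ∀ z : Fin (p + 1) → X × X,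
    z 0 = w → (∀ i, i ≠ 0 → z i ∈ T) → cycSumH p z ≤ 0}

/-- Domain of a multivalued operator (graph). -/
def opDom {X Y : Type*} (T : Set (X × Y)) : Set X := {x | ∃ y, (x, y) ∈ T}

/-- Range of a multivalued operator (graph). -/
def opRan {X Y : Type*} (T : Set (X × Y)) : Set Y := {y | ∃ x, (x, y) ∈ T}

/-- Image of a multivalued operator (graph) at a point. -/
def opIm {X Y : Type*} (T : Set (X × Y)) (x : X) : Set Y := {y | (x, y) ∈ T}

/-! If `S` is `p`-cyclically monotone and `A` lies in the `p`-polar of `S` above a single point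
`x`, then `A ∪ S` is `p`-cyclically monotone: rotate a cycle so that it starts in `A`; as all
points of `A` have first coordinate `x`, the cycle splits at each of its points in `A` into
cycles made of one point of `A` followed by points of `S`, and each of these is nonpositive by
the polar inequality, after padding it to length `p + 1` by repeating a point (which adds only
zero terms). Each `T (k + 1)` is such an `A ∪ T k`. -/

section PathSum

variable {X : Type*} [NormedAddCommGroup X] [InnerProductSpace ℝ X]

-- The sum along the path `a, b₁, …, bₘ` closed at `x`; for `x = a.1` it is the cyclic sum.
def pathSum : X × X → List (X × X) → X → ℝ
  | a, [], x => ⟪x - a.1, a.2⟫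
  | a, b :: t, x => ⟪b.1 - a.1, a.2⟫ + pathSum b t x

@[simp]
lemma pathSum_nil (a : X × X) (x : X) : pathSum a [] x = ⟪x - a.1, a.2⟫ := rfl

@[simp]
lemma pathSum_cons (a b : X × X) (t : List (X × X)) (x : X) :
    pathSum a (b :: t) x = ⟪b.1 - a.1, a.2⟫ + pathSum b t x := rfl

lemma pathSum_append_cons (a b : X × X) (u v : List (X × X)) (x : X) :
    pathSum a (u ++ b :: v) x = pathSum a u b.1 + pathSum b v x := by
  induction u generalizing a with
  | nil => simp
  | cons c u ih => simp only [List.cons_append, pathSum_cons, ih]; ring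

lemma pathSum_replicate_append (c : X × X) (k : ℕ) (t : List (X × X)) (x : X) :
    pathSum c (List.replicate k c ++ t) x = pathSum c t x := by
  induction k with
  | zero => rfl
  | succ k ih => simp [List.replicate_succ, ih]

lemma pathSum_ofFn {m : ℕ} (f : Fin (m + 1) → X × X) (x : X) :
    pathSum (f 0) (List.ofFn fun i => f i.succ) x =
      ∑ i : Fin m, ⟪(f i.succ).1 - (f i.castSucc).1, (f i.castSucc).2⟫ +
        ⟪x - (f (Fin.last m)).1, (f (Fin.last m)).2⟫ := by
  induction m with
  | zero => simp [Fin.last]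
  | succ m ih =>
    rw [List.ofFn_succ, pathSum_cons, ih fun i => f i.succ, Fin.sum_univ_succ]
    simp only [Fin.succ_zero_eq_one, Fin.castSucc_zero, Fin.succ_castSucc, Fin.succ_last]
    ring

lemma cycSumH_eq_pathSum {p : ℕ} (z : Fin (p + 1) → X × X) :
    cycSumH p z = pathSum (z 0) (List.ofFn fun i => z i.succ) (z 0).1 := by
  rw [pathSum_ofFn, cycSumH, Fin.sum_univ_castSucc, Fin.last_add_one]
  simp only [Fin.coeSucc_eq_succ]

lemma cycSumH_comp_add_right {p : ℕ} (z : Fin (p + 1) → X × X) (k : Fin (p + 1)) :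
    cycSumH p (fun i => z (i + k)) = cycSumH p z := by
  simp only [cycSumH, add_right_comm _ (1 : Fin (p + 1)) k]
  exact Fintype.sum_equiv (Equiv.addRight k) _ _ fun i => rfl

lemma exists_cycSumH_eq_pathSum {p : ℕ} (a : X × X) (t : List (X × X)) (ht : t.length = p) :
    ∃ z : Fin (p + 1) → X × X,
      z 0 = a ∧ (∀ i, i ≠ 0 → z i ∈ t) ∧ cycSumH p z = pathSum a t a.1 := by
  subst ht
  refine ⟨Fin.cons a t.get, rfl, fun i hi => ?_, ?_⟩
  · obtain ⟨j, rfl⟩ := Fin.eq_succ_of_ne_zero hi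
    exact List.get_mem t j
  · rw [cycSumH_eq_pathSum]
    simp

end PathSum

section Polar

variable {X : Type*} [NormedAddCommGroup X] [InnerProductSpace ℝ X]
  {p : ℕ} {S A : Set (X × X)}

lemma pathSum_self_nonpos_of_mem_cycPolarH {a : X × X} (ha : a ∈ cycPolarH p S)
    {t : List (X × X)} (htS : ∀ b ∈ t, b ∈ S) (hlen : t.length ≤ p) :
    pathSum a t a.1 ≤ 0 := by
  rcases t with _ | ⟨c, t⟩
  · simp
  · set L := c :: (List.replicate (p - (t.length + 1)) c ++ t)
    have hL : L.length = p := by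
      simp only [L, List.length_cons, List.length_append, List.length_replicate] at hlen ⊢
      omega
    obtain ⟨z, hz0, hzL, hz⟩ := exists_cycSumH_eq_pathSum a L hL
    have hzS : ∀ i, i ≠ 0 → z i ∈ S := fun i hi => by
      rcases List.mem_cons.mp (hzL i hi) with h | h
      · exact h ▸ htS c List.mem_cons_self
      · rcases List.mem_append.mp h with h | h
        · exact List.eq_of_mem_replicate h ▸ htS c List.mem_cons_self
        · exact htS _ (List.mem_cons_of_mem c h)
    calc pathSum a (c :: t) a.1 = cycSumH p z := by
          rw [hz, pathSum_cons, pathSum_cons, pathSum_replicate_append]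
      _ ≤ 0 := ha z hz0 hzS

lemma pathSum_append_nonpos (hAS : A ⊆ cycPolarH p S) {x : X} (hx : ∀ a ∈ A, a.1 = x)
    {b : X × X} (hb : b ∈ A) {u : List (X × X)} (huS : ∀ c ∈ u, c ∈ S) {l : List (X × X)}
    (hl : ∀ c ∈ l, c ∈ A ∪ S) (hlen : (u ++ l).length ≤ p) :
    pathSum b (u ++ l) x ≤ 0 := by
  induction l generalizing b u with
  | nil =>
    rw [List.append_nil, ← hx b hb]
    exact pathSum_self_nonpos_of_mem_cycPolarH (hAS hb) huS (by simpa using hlen)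
  | cons d l ih =>
    have hlA : ∀ c ∈ l, c ∈ A ∪ S := fun c hc => hl c (List.mem_cons_of_mem d hc)
    rcases hl d List.mem_cons_self with hdA | hdS
    · have hu := pathSum_self_nonpos_of_mem_cycPolarH (hAS hb) huS
        (by simp only [List.length_append, List.length_cons] at hlen; omega)
      have hdl := ih hdA (u := []) (by simp) hlA
        (by simp only [List.length_append, List.length_cons, List.length_nil] at hlen ⊢; omega)
      rw [List.nil_append] at hdl
      rw [pathSum_append_cons, (hx d hdA).trans (hx b hb).symm]
      linarith
    · rw [← List.singleton_append, ← List.append_assoc]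
      refine ih hb (fun c hc => ?_) hlA (by simpa using hlen)
      rcases List.mem_append.mp hc with hc | hc
      · exact huS c hc
      · exact List.mem_singleton.mp hc ▸ hdS

lemma CycMonoH.union_of_subset_cycPolarH (hS : CycMonoH p S) (hAS : A ⊆ cycPolarH p S)
    {x : X} (hx : ∀ a ∈ A, a.1 = x) : CycMonoH p (A ∪ S) := by
  intro z hz
  by_cases hzA : ∃ k, z k ∈ A
  · obtain ⟨k, hk⟩ := hzA
    rw [← cycSumH_comp_add_right z k, cycSumH_eq_pathSum, zero_add, hx _ hk]
    refine pathSum_append_nonpos hAS hx hk (u := []) (l := List.ofFn fun i => z (i.succ + k))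
      (by simp) (fun c hc => ?_) (by rw [List.nil_append, List.length_ofFn])
    obtain ⟨i, rfl⟩ := List.mem_ofFn.mp hc
    exact hz _
  · push Not at hzA
    exact hS z fun i => (hz i).resolve_left (hzA i)

end Polar

lemma singleton_prod_opIm_subset {X Y : Type*} (T : Set (X × Y)) (x : X) :
    {x} ×ˢ opIm T x ⊆ T := by
  rintro ⟨y, y'⟩ ⟨rfl, hy⟩
  exact hy

theorem construction_cycMono {X : Type*} [NormedAddCommGroup X] [InnerProductSpace ℝ X]
    (p n : ℕ) (w : Fin n → X × X) (T : ℕ → Set (X × X))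
    (hmono : CycMonoH p (Set.range w))
    (hT0 : T 0 = Set.range w)
    (hTk : ∀ k : Fin n, T ((k : ℕ) + 1) =
      ({(w k).1} ×ˢ opIm (cycPolarH p (T (k : ℕ))) (w k).1) ∪ T (k : ℕ)) :
    ∀ k ≤ n, CycMonoH p (T k) := by
  intro k hk
  induction k with
  | zero => rwa [hT0]
  | succ k ih =>
    rw [show T (k + 1) = _ from hTk ⟨k, hk⟩]
    exact (ih (by omega)).union_of_subset_cycPolarH (singleton_prod_opIm_subset _ _)
      fun a ha => ha.1
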